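/- Let g be a non-negative submodular function on a finite ground set N with |N| = n, let ℓ be a linear function on N, let β ∈ (0, 1], and let Δ ≥ 0. Define h(T) = E[g(T(β))] + β(1+β)·ℓ(T) for T ⊆ N. Suppose T ⊆ N satisfies h(T) ≥ h(T ∪ {u}) − 3Δ/2 for every u ∈ N \ T, and h(T) ≥ h(T \ {u}) − 3Δ/2 for every u ∈ T. Then for every set S ⊆ N: E[g(T(β))] + β·ℓ(T) ≥ (β(1−β)/(1+β))·g(S) + β·ℓ(S) − 3nΔ/2. -/

import Mathlib

/-- `expSample F β T` is the expectation `E[F (T(β))]`, where `T(β)` is a random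
subset of `T` containing each element of `T` independently with probability `β`:
`E[F (T(β))] = ∑_{A ⊆ T} β^|A| (1−β)^{|T|−|A|} F A`. -/
noncomputable def expSample {α : Type*} [DecidableEq α]
    (F : Finset α → ℝ) (β : ℝ) (T : Finset α) : ℝ :=
  ∑ A ∈ T.powerset, β ^ A.card * (1 - β) ^ (T.card - A.card) * F A

/-!
Write `G T = E[g (T(β))]`. Averaging submodularity over the random sample shows that `G`, and
hence `h = G + β(1+β)ℓ`, is submodular. Summing the approximate local optimality conditions
over `S \ T` and `T \ S` therefore gives `h (S ∪ T) + h (S ∩ T) ≤ 2 h T + 3nΔ/2`.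
On the other hand `G` is concave along nonnegative directions, which together with `g ≥ 0`
yields `(1 - β) G T + β(1 - β) g S ≤ G (S ∪ T) + G (S ∩ T)`. As `ℓ` is modular, the two bounds
combine to `β(1 - β) g S ≤ (1 + β)(G T + βℓ T - βℓ S) + 3nΔ/2`.
-/

open Finset

section ExpSample

variable {α : Type*} [DecidableEq α]

lemma expSample_empty (F : Finset α → ℝ) (β : ℝ) : expSample F β ∅ = F ∅ := by
  simp [expSample]

lemma expSample_insert (F : Finset α → ℝ) (β : ℝ) {u : α} {T : Finset α} (hu : u ∉ T) :
    expSample F β (insert u T) =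
      β * expSample (fun A => F (insert u A)) β T + (1 - β) * expSample F β T := by
  simp only [expSample, sum_powerset_insert hu, mul_sum, card_insert_of_notMem hu]
  rw [add_comm]
  congr 1 <;> refine sum_congr rfl fun A hA => ?_
  · have hA : u ∉ A := fun h => hu (mem_powerset.mp hA h)
    rw [card_insert_of_notMem hA, Nat.succ_sub_succ, pow_succ]
    ring
  · rw [Nat.succ_sub (card_le_card (mem_powerset.mp hA)), pow_succ]
    ring

lemma expSample_mono {F F' : Finset α → ℝ} {β : ℝ} {T : Finset α}
    (hβ0 : 0 ≤ β) (hβ1 : β ≤ 1) (h : ∀ A ⊆ T, F A ≤ F' A) :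
    expSample F β T ≤ expSample F' β T := by
  have : 0 ≤ 1 - β := by linarith
  exact sum_le_sum fun A hA => by gcongr; exact h A (mem_powerset.mp hA)

lemma expSample_nonneg {F : Finset α → ℝ} {β : ℝ} {T : Finset α}
    (hβ0 : 0 ≤ β) (hβ1 : β ≤ 1) (h : ∀ A ⊆ T, 0 ≤ F A) :
    0 ≤ expSample F β T := by
  have : 0 ≤ 1 - β := by linarith
  exact sum_nonneg fun A hA => mul_nonneg (by positivity) (h A (mem_powerset.mp hA))

lemma expSample_add (F F' : Finset α → ℝ) (β : ℝ) (T : Finset α) :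
    expSample (fun A => F A + F' A) β T = expSample F β T + expSample F' β T := by
  simp only [expSample, mul_add, sum_add_distrib]

lemma expSample_const_mul (c : ℝ) (F : Finset α → ℝ) (β : ℝ) (T : Finset α) :
    expSample (fun A => c * F A) β T = c * expSample F β T := by
  simp only [expSample, mul_sum]
  exact sum_congr rfl fun A _ => by ring

lemma expSample_comp_inter (F : Finset α → ℝ) (β : ℝ) (S U : Finset α) :
    expSample (fun A => F (A ∩ S)) β U = expSample F β (U ∩ S) := by
  induction U using Finset.induction_on generalizing F with
  | empty => simp [expSample_empty]
  | @insert u U hu ih =>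
    rw [expSample_insert _ _ hu]
    by_cases huS : u ∈ S
    · simp only [insert_inter_of_mem huS]
      rw [ih (fun C => F (insert u C)), ih F, expSample_insert F β (by simp [hu])]
    · simp only [insert_inter_of_notMem huS, ih F]
      ring

lemma expSample_union_of_disjoint (F : Finset α → ℝ) (β : ℝ) {Q R : Finset α}
    (hQR : Disjoint Q R) :
    expSample F β (Q ∪ R) = expSample (fun B => expSample (fun A => F (B ∪ A)) β R) β Q := by
  induction Q using Finset.induction_on generalizing F with
  | empty => simp [expSample_empty]
  | @insert u Q hu ih =>
    rw [disjoint_insert_left] at hQR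
    rw [insert_union, expSample_insert _ _ (by simp [hu, hQR.1]), ih _ hQR.2, ih F hQR.2,
      expSample_insert _ _ hu]
    simp only [insert_union]

end ExpSample

section Submodular

variable {α : Type*} [DecidableEq α]

def IsSubmodular (F : Finset α → ℝ) : Prop :=
  ∀ S T, F (S ∪ T) + F (S ∩ T) ≤ F S + F T

def IsApproxLocalMax (F : Finset α → ℝ) (ε : ℝ) (T : Finset α) : Prop :=
  (∀ u ∉ T, F (T ∪ {u}) ≤ F T + ε) ∧ ∀ u ∈ T, F (T \ {u}) ≤ F T + ε

namespace IsSubmodular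

variable {F g : Finset α → ℝ} {β : ℝ}

lemma add_sum (hF : IsSubmodular F) (a : α → ℝ) :
    IsSubmodular fun S => F S + ∑ v ∈ S, a v := fun S T => by
  linarith [hF S T, sum_union_inter (s₁ := S) (s₂ := T) (f := a)]

lemma expSample (hg : IsSubmodular g) (hβ0 : 0 ≤ β) (hβ1 : β ≤ 1) :
    IsSubmodular (expSample g β) := fun S T => by
  have restrict : ∀ V ⊆ S ∪ T, _root_.expSample g β V =
      _root_.expSample (fun A => g (A ∩ V)) β (S ∪ T) := fun V hV => by
    rw [expSample_comp_inter, inter_eq_right.mpr hV]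
  rw [restrict S subset_union_left, restrict T subset_union_right, restrict (S ∪ T) subset_rfl,
    restrict (S ∩ T) (inter_subset_left.trans subset_union_left), ← expSample_add,
    ← expSample_add]
  refine expSample_mono hβ0 hβ1 fun A hA => ?_
  have h := hg (A ∩ S) (A ∩ T)
  rwa [← inter_union_distrib_left, ← inter_inter_distrib_left] at h

lemma sub_le_sum_insert_sub (hF : IsSubmodular F) (T : Finset α) {D : Finset α}
    (hD : Disjoint D T) : F (T ∪ D) - F T ≤ ∑ u ∈ D, (F (T ∪ {u}) - F T) := by
  induction D using Finset.induction_on with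
  | empty => simp
  | @insert u D hu ih =>
    rw [disjoint_insert_left] at hD
    have h := hF (T ∪ {u}) (T ∪ D)
    rw [show T ∪ {u} ∪ (T ∪ D) = T ∪ insert u D by grind,
      show (T ∪ {u}) ∩ (T ∪ D) = T by grind] at h
    rw [sum_insert hu]
    linarith [ih hD.2]

lemma sum_sub_sdiff_le (hF : IsSubmodular F) (T : Finset α) {D : Finset α} (hD : D ⊆ T) :
    ∑ u ∈ D, (F T - F (T \ {u})) ≤ F T - F (T \ D) := by
  induction D using Finset.induction_on with
  | empty => simp
  | @insert u D hu ih =>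
    rw [insert_subset_iff] at hD
    have h := hF (T \ {u}) (T \ D)
    rw [show T \ {u} ∪ T \ D = T by grind,
      show T \ {u} ∩ (T \ D) = T \ insert u D by grind] at h
    rw [sum_insert hu]
    linarith [ih hD.2]

lemma union_add_inter_le_of_isApproxLocalMax (hF : IsSubmodular F) {ε : ℝ} {T : Finset α}
    (hT : IsApproxLocalMax F ε T) (S : Finset α) :
    F (S ∪ T) + F (S ∩ T) ≤ 2 * F T + (#(S \ T) + #(T \ S)) * ε := by
  have hadd := hF.sub_le_sum_insert_sub T (sdiff_disjoint (s := T) (t := S))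
  have hrem := hF.sum_sub_sdiff_le T (sdiff_subset (s := T) (t := S))
  rw [union_sdiff_self_eq_union, union_comm] at hadd
  rw [sdiff_sdiff_self_left, inter_comm] at hrem
  have hadd' : ∑ u ∈ S \ T, (F (T ∪ {u}) - F T) ≤ #(S \ T) * ε := by
    simpa using sum_le_sum fun u hu => sub_le_iff_le_add'.mpr (hT.1 u (mem_sdiff.mp hu).2)
  have hrem' : -(#(T \ S) * ε) ≤ ∑ u ∈ T \ S, (F T - F (T \ {u})) := by
    simpa using sum_le_sum fun u (hu : u ∈ T \ S) =>
      neg_le_sub_iff_le_add.mpr (hT.2 u (mem_sdiff.mp hu).1)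
  linarith

/-- Concavity of the multilinear extension of `g` along the segment from `X` to `X ∪ R`. -/
lemma sub_mul_add_mul_le_expSample_union (hg : IsSubmodular g) (hβ0 : 0 ≤ β) (hβ1 : β ≤ 1)
    (X R : Finset α) :
    (1 - β) * g X + β * g (X ∪ R) ≤ _root_.expSample (fun A => g (X ∪ A)) β R := by
  induction R using Finset.induction_on generalizing X with
  | empty =>
    rw [expSample_empty, union_empty]
    linarith
  | @insert u R hu ih =>
    rw [expSample_insert _ _ hu]
    simp only [union_insert, ← insert_union]
    have h := hg (insert u X) (X ∪ R)
    rw [show insert u X ∪ (X ∪ R) = insert u X ∪ R by grind,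
      show insert u X ∩ (X ∪ R) = X by grind] at h
    nlinarith [ih X, ih (insert u X), mul_nonneg hβ0 (sub_nonneg.mpr hβ1)]

lemma sub_mul_expSample_add_le_expSample_union (hg : IsSubmodular g) (hg0 : ∀ S, 0 ≤ g S)
    (hβ0 : 0 ≤ β) (hβ1 : β ≤ 1) {R S : Finset α} (hRS : Disjoint R S) :
    (1 - β) * _root_.expSample g β R + β * (1 - β) * g S ≤ _root_.expSample g β (R ∪ S) := by
  have hS : (1 - β) * g S ≤ _root_.expSample (fun B => g (B ∪ S)) β R := by
    have h := hg.sub_mul_add_mul_le_expSample_union hβ0 hβ1 S R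
    simp only [union_comm S] at h
    nlinarith [hg0 (R ∪ S)]
  calc (1 - β) * _root_.expSample g β R + β * (1 - β) * g S
      ≤ (1 - β) * _root_.expSample g β R + β * _root_.expSample (fun B => g (B ∪ S)) β R := by
        rw [mul_assoc β]
        gcongr
    _ = _root_.expSample (fun B => (1 - β) * g B + β * g (B ∪ S)) β R := by
        rw [expSample_add, expSample_const_mul, expSample_const_mul]
    _ ≤ _ := by
        rw [expSample_union_of_disjoint g β hRS]
        exact expSample_mono hβ0 hβ1 fun B _ =>
          hg.sub_mul_add_mul_le_expSample_union hβ0 hβ1 B S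

lemma sub_mul_expSample_add_le_expSample_union_add_inter (hg : IsSubmodular g)
    (hg0 : ∀ S, 0 ≤ g S) (hβ0 : 0 ≤ β) (hβ1 : β ≤ 1) (S T : Finset α) :
    (1 - β) * _root_.expSample g β T + β * (1 - β) * g S ≤
      _root_.expSample g β (S ∪ T) + _root_.expSample g β (S ∩ T) := by
  have hsplit := hg.expSample hβ0 hβ1 (T \ S) (S ∩ T)
  rw [show T \ S ∪ S ∩ T = T by grind, show T \ S ∩ (S ∩ T) = ∅ by grind,
    expSample_empty] at hsplit
  have hunion := hg.sub_mul_expSample_add_le_expSample_union hg0 hβ0 hβ1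
    (sdiff_disjoint (s := S) (t := T))
  rw [sdiff_union_self_eq_union, union_comm] at hunion
  have hinter := expSample_nonneg hβ0 hβ1 fun A (_ : A ⊆ S ∩ T) => hg0 A
  nlinarith [hg0 ∅]

end IsSubmodular

end Submodular

lemma card_sdiff_add_card_sdiff_le_card {α : Type*} [Fintype α] [DecidableEq α]
    (S T : Finset α) : #(S \ T) + #(T \ S) ≤ Fintype.card α := by
  rw [← card_union_of_disjoint disjoint_sdiff_sdiff]
  exact card_le_univ _

/-- **Approximate local maxima of the auxiliary function are good.**
Let `g` be a non-negative submodular function on a finite ground set of size `n`,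
`ℓ` a linear function (with weights `a`), `β ∈ (0, 1]` and `Δ ≥ 0`.  Define
`h T = E[g (T(β))] + β(1+β)·ℓ T`.  If `T` satisfies
`h T ≥ h (T ∪ {u}) − 3Δ/2` for every `u ∉ T` and
`h T ≥ h (T \ {u}) − 3Δ/2` for every `u ∈ T`, then for every `S`:
`E[g (T(β))] + β·ℓ T ≥ (β(1−β)/(1+β))·g S + β·ℓ S − 3nΔ/2`. -/
theorem approx_local_max_guarantee
    {α : Type*} [Fintype α] [DecidableEq α]
    (g : Finset α → ℝ)
    (hg_sub : ∀ S T : Finset α, g (S ∪ T) + g (S ∩ T) ≤ g S + g T)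
    (hg_nonneg : ∀ S : Finset α, 0 ≤ g S)
    (a : α → ℝ) (ℓ : Finset α → ℝ) (hℓ : ∀ S : Finset α, ℓ S = ∑ v ∈ S, a v)
    (β Δ : ℝ) (hβ0 : 0 < β) (hβ1 : β ≤ 1) (hΔ : 0 ≤ Δ)
    (h : Finset α → ℝ)
    (hh : ∀ T : Finset α, h T = expSample g β T + β * (1 + β) * ℓ T)
    (T : Finset α)
    (hT_add : ∀ u : α, u ∉ T → h T ≥ h (T ∪ {u}) - 3 * Δ / 2)
    (hT_rem : ∀ u : α, u ∈ T → h T ≥ h (T \ {u}) - 3 * Δ / 2)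
    (S : Finset α) :
    expSample g β T + β * ℓ T ≥
      β * (1 - β) / (1 + β) * g S + β * ℓ S - 3 * (Fintype.card α : ℝ) * Δ / 2 := by
  have h_eq : h = fun T => expSample g β T + ∑ v ∈ T, β * (1 + β) * a v :=
    funext fun T => by rw [hh, hℓ, mul_sum]
  have hg : IsSubmodular g := hg_sub
  have h_sub : IsSubmodular h := h_eq ▸ (hg.expSample hβ0.le hβ1).add_sum _
  have hT : IsApproxLocalMax h (3 * Δ / 2) T :=
    ⟨fun u hu => by linarith [hT_add u hu], fun u hu => by linarith [hT_rem u hu]⟩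
  have hlocal := h_sub.union_add_inter_le_of_isApproxLocalMax hT S
  have hconcave :=
    hg.sub_mul_expSample_add_le_expSample_union_add_inter hg_nonneg hβ0.le hβ1 S T
  have hℓ_modular : β * (1 + β) * ℓ (S ∪ T) + β * (1 + β) * ℓ (S ∩ T) =
      β * (1 + β) * ℓ S + β * (1 + β) * ℓ T := by
    simp only [hℓ, ← mul_add]
    rw [sum_union_inter]
  have hcard : (#(S \ T) + #(T \ S) : ℝ) * (3 * Δ / 2) ≤ Fintype.card α * (3 * Δ / 2) := by
    gcongr
    exact_mod_cast card_sdiff_add_card_sdiff_le_card S T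
  rw [hh, hh, hh] at hlocal
  have hmain : β * (1 - β) / (1 + β) * g S ≤
      expSample g β T + β * ℓ T - β * ℓ S + Fintype.card α * (3 * Δ / 2) := by
    rw [div_mul_eq_mul_div, div_le_iff₀ (by linarith)]
    linarith [mul_nonneg hβ0.le (mul_nonneg (Nat.cast_nonneg (Fintype.card α)) hΔ)]
  linarith
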